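/- Let n ≥ 2, let t be a nonzero complex number and set q = t². Let V be the complex vector space with basis {e_{j_1,…,j_n} : (j_1,…,j_n) ∈ {1,…,n}^n}. For 1 ≤ k ≤ n−1 and 1 ≤ l ≤ n define q_k^l(j_1,…,j_n) := t^{a−b} where a = #{p < l : j_p = k} − #{p < l : j_p = k+1} and b = #{p > l : j_p = k} − #{p > l : j_p = k+1}. Define linear operators on V: E_k(e_{j_1,…,j_n}) = ∑_{l : j_l = k+1} q_k^l(j_1,…,j_n) · e_{j_1,…,j_{l−1},k,j_{l+1},…,j_n}; F_k(e_{j_1,…,j_n}) = ∑_{l : j_l = k} q_k^l(j_1,…,j_n) · e_{j_1,…,j_{l−1},k+1,j_{l+1},…,j_n}; and for λ = (λ_1,…,λ_n) ∈ (½ℤ)^n, K^λ(e_{j_1,…,j_n}) = t^{2(λ_{j_1}+⋯+λ_{j_n})} e_{j_1,…,j_n}. Let T_m (1 ≤ m ≤ n−1) be the Hecke operators defined by: T_m(e_{j_1,…,j_n}) equals e with entries at positions m, m+1 swapped if j_m < j_{m+1}; equals q^{−1} e_{j_1,…,j_n} if j_m = j_{m+1}; and equals the swapped basis vector minus (q−q^{−1})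 e_{j_1,…,j_n} if j_m > j_{m+1}. Then for all admissible indices k, m and all λ ∈ (½ℤ)^n, the operator T_m commutes with each of E_k, F_k, and K^λ. -/
import Mathlib


/-- The standard basis vector `e_j` of `V = (ℂⁿ)^{⊗n}`, realized as the space of
complex-valued functions on `{1,…,n}ⁿ`. -/
noncomputable def basisE (n : ℕ) (j : Fin n → Fin n) : (Fin n → Fin n) → ℂ :=
  Pi.single j 1

/-- The coefficient `q_k^l(j_1,…,j_n) = t^{a−b}` where
`a = #{p<l : j_p = k} − #{p<l : j_p = k+1}` and `b = #{p>l : j_p = k} − #{p>l : j_p = k+1}`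
(values of `Fin n` read as `0`-indexed natural numbers). -/
noncomputable def qklCoeff (n : ℕ) (t : ℂ) (k : ℕ) (l : Fin n) (j : Fin n → Fin n) : ℂ :=
  t ^ (((((Finset.univ.filter fun p : Fin n => p < l ∧ (j p : ℕ) = k).card : ℤ) -
         ((Finset.univ.filter fun p : Fin n => p < l ∧ (j p : ℕ) = k + 1).card : ℤ)) -
        (((Finset.univ.filter fun p : Fin n => l < p ∧ (j p : ℕ) = k).card : ℤ) -
         ((Finset.univ.filter fun p : Fin n => l < p ∧ (j p : ℕ) = k + 1).card : ℤ))))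

open Finset

/-- weight -/
def wgt (k v : ℕ) : ℤ := (if v = k then 1 else 0) - (if v = k + 1 then 1 else 0)

/-- exponent -/
def expo (n k : ℕ) (l : Fin n) (j : Fin n → Fin n) : ℤ :=
  (∑ p ∈ univ.filter (· < l), wgt k ((j p : ℕ))) - ∑ p ∈ univ.filter (l < ·), wgt k ((j p : ℕ))

lemma qklCoeff_eq (n : ℕ) (t : ℂ) (k : ℕ) (l : Fin n) (j : Fin n → Fin n) :
    qklCoeff n t k l j = t ^ expo n k l j := by
  unfold qklCoeff expo wgt
  congr 1
  rw [Finset.sum_sub_distrib, Finset.sum_sub_distrib]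
  simp only [Finset.sum_boole, ← Finset.filter_filter]

lemma wgt_self (k : ℕ) : wgt k k = 1 := by simp [wgt]
lemma wgt_succ (k : ℕ) : wgt k (k+1) = -1 := by simp [wgt]
lemma wgt_other {k v : ℕ} (h1 : v ≠ k) (h2 : v ≠ k+1) : wgt k v = 0 := by simp [wgt, h1, h2]

section Swap
variable {n : ℕ} (p0 p1 : Fin n)

lemma p0_ne_p1 (h01 : (p0 : ℕ) + 1 = (p1 : ℕ)) : p0 ≠ p1 := by
  intro h; rw [h] at h01; omega

lemma swap_lt_iff (h01 : (p0 : ℕ) + 1 = (p1 : ℕ)) {l : Fin n} (h0 : l ≠ p0) (h1 : l ≠ p1) (p : Fin n) :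
    Equiv.swap p0 p1 p < l ↔ p < l := by
  rcases eq_or_ne p p0 with rfl | hp0
  · rw [Equiv.swap_apply_left]
    rw [Fin.lt_def, Fin.lt_def]
    have := Fin.val_ne_of_ne h0
    have := Fin.val_ne_of_ne h1
    omega
  rcases eq_or_ne p p1 with rfl | hp1
  · rw [Equiv.swap_apply_right]
    rw [Fin.lt_def, Fin.lt_def]
    have := Fin.val_ne_of_ne h0
    have := Fin.val_ne_of_ne h1
    omega
  · rw [Equiv.swap_apply_of_ne_of_ne hp0 hp1]

lemma swap_gt_iff (h01 : (p0 : ℕ) + 1 = (p1 : ℕ)) {l : Fin n} (h0 : l ≠ p0) (h1 : l ≠ p1) (p : Fin n) :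
    l < Equiv.swap p0 p1 p ↔ l < p := by
  rcases eq_or_ne p p0 with rfl | hp0
  · rw [Equiv.swap_apply_left, Fin.lt_def, Fin.lt_def]
    have := Fin.val_ne_of_ne h0
    have := Fin.val_ne_of_ne h1
    omega
  rcases eq_or_ne p p1 with rfl | hp1
  · rw [Equiv.swap_apply_right, Fin.lt_def, Fin.lt_def]
    have := Fin.val_ne_of_ne h0
    have := Fin.val_ne_of_ne h1
    omega
  · rw [Equiv.swap_apply_of_ne_of_ne hp0 hp1]

lemma expo_swap_ne (h01 : (p0 : ℕ) + 1 = (p1 : ℕ)) (k : ℕ) {l : Fin n} (h0 : l ≠ p0) (h1 : l ≠ p1) (j : Fin n → Fin n) :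
    expo n k l (j ∘ Equiv.swap p0 p1) = expo n k l j := by
  unfold expo
  congr 1
  · exact Finset.sum_equiv (Equiv.swap p0 p1)
      (fun p => by simp only [mem_filter, mem_univ, true_and]; exact (swap_lt_iff p0 p1 h01 h0 h1 p).symm)
      (fun p _ => rfl)
  · exact Finset.sum_equiv (Equiv.swap p0 p1)
      (fun p => by simp only [mem_filter, mem_univ, true_and]; exact (swap_gt_iff p0 p1 h01 h0 h1 p).symm)
      (fun p _ => rfl)
end Swap

section Expo
variable {n : ℕ} (p0 p1 : Fin n)

lemma filter_lt_p1 (h01 : (p0 : ℕ) + 1 = (p1 : ℕ)) :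
    univ.filter (· < p1) = insert p0 (univ.filter (· < p0)) := by
  ext p
  simp only [mem_filter, mem_univ, true_and, mem_insert, Fin.lt_def, Fin.ext_iff]
  omega

lemma filter_gt_p0 (h01 : (p0 : ℕ) + 1 = (p1 : ℕ)) :
    univ.filter (p0 < ·) = insert p1 (univ.filter (p1 < ·)) := by
  ext p
  simp only [mem_filter, mem_univ, true_and, mem_insert, Fin.lt_def, Fin.ext_iff]
  omega

lemma expo_p0_eq (h01 : (p0 : ℕ) + 1 = (p1 : ℕ)) (k : ℕ) (j : Fin n → Fin n) :
    expo n k p0 j = (∑ p ∈ univ.filter (· < p0), wgt k ((j p : ℕ)))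
      - (wgt k ((j p1 : ℕ)) + ∑ p ∈ univ.filter (p1 < ·), wgt k ((j p : ℕ))) := by
  unfold expo
  rw [filter_gt_p0 p0 p1 h01, Finset.sum_insert (by
    simp only [mem_filter, mem_univ, true_and, lt_self_iff_false, not_false_iff])]

lemma expo_p1_eq (h01 : (p0 : ℕ) + 1 = (p1 : ℕ)) (k : ℕ) (j : Fin n → Fin n) :
    expo n k p1 j = (wgt k ((j p0 : ℕ)) + ∑ p ∈ univ.filter (· < p0), wgt k ((j p : ℕ)))
      - ∑ p ∈ univ.filter (p1 < ·), wgt k ((j p : ℕ)) := by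
  unfold expo
  rw [filter_lt_p1 p0 p1 h01, Finset.sum_insert (by
    simp only [mem_filter, mem_univ, true_and, lt_self_iff_false, not_false_iff])]

lemma sum_lt_swap (h01 : (p0 : ℕ) + 1 = (p1 : ℕ)) (k : ℕ) (j : Fin n → Fin n) :
    ∑ p ∈ univ.filter (· < p0), wgt k (((j ∘ Equiv.swap p0 p1) p : ℕ))
      = ∑ p ∈ univ.filter (· < p0), wgt k ((j p : ℕ)) := by
  refine Finset.sum_congr rfl fun p hp => ?_
  simp only [mem_filter, mem_univ, true_and, Fin.lt_def] at hp
  have h0 : p ≠ p0 := Fin.ne_of_val_ne (by omega)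
  have h1 : p ≠ p1 := Fin.ne_of_val_ne (by omega)
  simp [Equiv.swap_apply_of_ne_of_ne h0 h1]

lemma sum_gt_swap (h01 : (p0 : ℕ) + 1 = (p1 : ℕ)) (k : ℕ) (j : Fin n → Fin n) :
    ∑ p ∈ univ.filter (p1 < ·), wgt k (((j ∘ Equiv.swap p0 p1) p : ℕ))
      = ∑ p ∈ univ.filter (p1 < ·), wgt k ((j p : ℕ)) := by
  refine Finset.sum_congr rfl fun p hp => ?_
  simp only [mem_filter, mem_univ, true_and, Fin.lt_def] at hp
  have h0 : p ≠ p0 := Fin.ne_of_val_ne (by omega)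
  have h1 : p ≠ p1 := Fin.ne_of_val_ne (by omega)
  simp [Equiv.swap_apply_of_ne_of_ne h0 h1]

lemma expo_p1_swap (h01 : (p0 : ℕ) + 1 = (p1 : ℕ)) (k : ℕ) (j : Fin n → Fin n) :
    expo n k p1 (j ∘ Equiv.swap p0 p1)
      = expo n k p0 j + 2 * wgt k ((j p1 : ℕ)) := by
  rw [expo_p1_eq p0 p1 h01, expo_p0_eq p0 p1 h01, sum_lt_swap p0 p1 h01, sum_gt_swap p0 p1 h01]
  have : (j ∘ Equiv.swap p0 p1) p0 = j p1 := by simp [Equiv.swap_apply_left]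
  rw [this]; ring

lemma expo_p0_swap (h01 : (p0 : ℕ) + 1 = (p1 : ℕ)) (k : ℕ) (j : Fin n → Fin n) :
    expo n k p0 (j ∘ Equiv.swap p0 p1)
      = expo n k p1 j - 2 * wgt k ((j p0 : ℕ)) := by
  rw [expo_p0_eq p0 p1 h01, expo_p1_eq p0 p1 h01, sum_lt_swap p0 p1 h01, sum_gt_swap p0 p1 h01]
  have : (j ∘ Equiv.swap p0 p1) p1 = j p0 := by simp [Equiv.swap_apply_right]
  rw [this]; ring

lemma expo_p1_p0 (h01 : (p0 : ℕ) + 1 = (p1 : ℕ)) (k : ℕ) (j : Fin n → Fin n) :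
    expo n k p1 j = expo n k p0 j + wgt k ((j p0 : ℕ)) + wgt k ((j p1 : ℕ)) := by
  rw [expo_p1_eq p0 p1 h01, expo_p0_eq p0 p1 h01]; ring

end Expo

section Update
variable {n : ℕ} (p0 p1 : Fin n)

lemma update_swap_ne {l : Fin n} (h0 : l ≠ p0) (h1 : l ≠ p1) (j : Fin n → Fin n) (v : Fin n) :
    Function.update j l v ∘ Equiv.swap p0 p1
      = Function.update (j ∘ Equiv.swap p0 p1) l v := by
  have hsl : Equiv.swap p0 p1 l = l := Equiv.swap_apply_of_ne_of_ne h0 h1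
  funext p
  show Function.update j l v (Equiv.swap p0 p1 p) = Function.update (j ∘ Equiv.swap p0 p1) l v p
  rcases eq_or_ne p l with rfl | hp
  · rw [hsl, Function.update_self, Function.update_self]
  · have hsp : Equiv.swap p0 p1 p ≠ l := by
      rw [← hsl]; exact fun h => hp ((Equiv.swap p0 p1).injective h)
    rw [Function.update_of_ne hsp, Function.update_of_ne hp]
    rfl

lemma update_p0_swap (hne : p0 ≠ p1) (j : Fin n → Fin n) (v : Fin n) :
    Function.update j p0 v ∘ Equiv.swap p0 p1
      = Function.update (j ∘ Equiv.swap p0 p1) p1 v := by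
  funext p
  show Function.update j p0 v (Equiv.swap p0 p1 p) = Function.update (j ∘ Equiv.swap p0 p1) p1 v p
  rcases eq_or_ne p p1 with rfl | hp1
  · rw [Equiv.swap_apply_right, Function.update_self, Function.update_self]
  rcases eq_or_ne p p0 with rfl | hp0
  · rw [Equiv.swap_apply_left, Function.update_of_ne hne.symm, Function.update_of_ne hne]
    simp [Equiv.swap_apply_left]
  · have hs : Equiv.swap p0 p1 p = p := Equiv.swap_apply_of_ne_of_ne hp0 hp1
    rw [hs, Function.update_of_ne hp0, Function.update_of_ne hp1]
    simp [hs]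

lemma update_p1_swap (hne : p0 ≠ p1) (j : Fin n → Fin n) (v : Fin n) :
    Function.update j p1 v ∘ Equiv.swap p0 p1
      = Function.update (j ∘ Equiv.swap p0 p1) p0 v := by
  funext p
  show Function.update j p1 v (Equiv.swap p0 p1 p) = Function.update (j ∘ Equiv.swap p0 p1) p0 v p
  rcases eq_or_ne p p0 with rfl | hp0
  · rw [Equiv.swap_apply_left, Function.update_self, Function.update_self]
  rcases eq_or_ne p p1 with rfl | hp1
  · rw [Equiv.swap_apply_right, Function.update_of_ne hne, Function.update_of_ne hne.symm]
    simp [Equiv.swap_apply_right]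
  · have hs : Equiv.swap p0 p1 p = p := Equiv.swap_apply_of_ne_of_ne hp0 hp1
    rw [hs, Function.update_of_ne hp1, Function.update_of_ne hp0]
    simp [hs]

lemma comp_swap_self (j : Fin n → Fin n) (h : j p0 = j p1) :
    j ∘ Equiv.swap p0 p1 = j := by
  funext p
  show j (Equiv.swap p0 p1 p) = j p
  rcases eq_or_ne p p0 with rfl | hp0
  · rw [Equiv.swap_apply_left, h]
  rcases eq_or_ne p p1 with rfl | hp1
  · rw [Equiv.swap_apply_right, h]
  · rw [Equiv.swap_apply_of_ne_of_ne hp0 hp1]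

end Update

lemma sum_split {M : Type*} [AddCommMonoid M] {n : ℕ} (p0 p1 : Fin n) (hne : p0 ≠ p1)
    (f : Fin n → M) :
    ∑ l, f l = (∑ l ∈ univ \ {p0, p1}, f l) + (f p0 + f p1) := by
  rw [← Finset.sum_pair hne, Finset.sum_sdiff (Finset.subset_univ _)]

lemma zpow_two'' (t : ℂ) : t ^ (2 : ℤ) = t ^ 2 := by
  rw [show ((2:ℤ)) = ((2:ℕ):ℤ) from rfl, zpow_natCast]

lemma zpow_neg_two' (t : ℂ) : t ^ (-2 : ℤ) = (t ^ 2)⁻¹ := by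
  rw [zpow_neg, zpow_two'']

section QklRel
variable {n : ℕ} (p0 p1 : Fin n) (t : ℂ) (k : ℕ)

lemma qkl_p1_p0 (h01 : (p0 : ℕ) + 1 = (p1 : ℕ)) (ht : t ≠ 0) (j : Fin n → Fin n) :
    qklCoeff n t k p1 j
      = t ^ (wgt k ((j p0 : ℕ)) + wgt k ((j p1 : ℕ))) * qklCoeff n t k p0 j := by
  rw [qklCoeff_eq, qklCoeff_eq, expo_p1_p0 p0 p1 h01 k j, zpow_add₀ ht, zpow_add₀ ht,
    zpow_add₀ ht (wgt k ((j p0 : ℕ))) (wgt k ((j p1 : ℕ)))]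
  ring

lemma qkl_p1_swap (h01 : (p0 : ℕ) + 1 = (p1 : ℕ)) (ht : t ≠ 0) (j : Fin n → Fin n) :
    qklCoeff n t k p1 (j ∘ Equiv.swap p0 p1)
      = t ^ (2 * wgt k ((j p1 : ℕ))) * qklCoeff n t k p0 j := by
  rw [qklCoeff_eq, qklCoeff_eq, expo_p1_swap p0 p1 h01 k j, zpow_add₀ ht]
  ring

lemma qkl_p0_swap (h01 : (p0 : ℕ) + 1 = (p1 : ℕ)) (ht : t ≠ 0) (j : Fin n → Fin n) :
    qklCoeff n t k p0 (j ∘ Equiv.swap p0 p1)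
      = t ^ (-(2 * wgt k ((j p0 : ℕ)))) * qklCoeff n t k p1 j := by
  rw [qklCoeff_eq, qklCoeff_eq, expo_p0_swap p0 p1 h01 k j, sub_eq_add_neg, zpow_add₀ ht]
  ring

end QklRel

lemma commE_basis {n : ℕ} (t : ℂ) (ht : t ≠ 0) (k : ℕ)
    (kf : Fin n) (hkf : (kf : ℕ) = k)
    (p0 p1 : Fin n) (h01 : (p0 : ℕ) + 1 = (p1 : ℕ))
    (Ek Tm : Module.End ℂ ((Fin n → Fin n) → ℂ))
    (hE : ∀ j : Fin n → Fin n, Ek (basisE n j) =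
      ∑ l : Fin n, if (j l : ℕ) = k + 1 then
        qklCoeff n t k l j • basisE n (Function.update j l kf) else 0)
    (hT : ∀ j : Fin n → Fin n, Tm (basisE n j) =
      if j p0 < j p1 then basisE n (j ∘ Equiv.swap p0 p1)
      else if j p0 = j p1 then (t ^ 2)⁻¹ • basisE n j
      else basisE n (j ∘ Equiv.swap p0 p1) - (t ^ 2 - (t ^ 2)⁻¹) • basisE n j)
    (j : Fin n → Fin n) :
    Tm (Ek (basisE n j)) = Ek (Tm (basisE n j)) := by
  classical
  have ht2 : (t : ℂ) ^ 2 ≠ 0 := pow_ne_zero 2 ht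
  have hne : p0 ≠ p1 := p0_ne_p1 p0 p1 h01
  have hne' : p1 ≠ p0 := hne.symm
  have hTite : ∀ (c : Prop) [Decidable c] (a : (Fin n → Fin n) → ℂ),
      Tm (if c then a else 0) = if c then Tm a else 0 := by
    intro c _ a; split_ifs <;> simp
  rw [hE j, map_sum]
  simp only [hTite, map_smul]
  rw [hT j]
  rcases lt_trichotomy (j p0) (j p1) with hlt | heq | hgt
  · -- a < b
    have hlt' : (j p0 : ℕ) < (j p1 : ℕ) := hlt
    rw [if_pos hlt, hE (j ∘ Equiv.swap p0 p1), sum_split p0 p1 hne, sum_split p0 p1 hne]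
    congr 1
    · refine Finset.sum_congr rfl fun l hl => ?_
      rw [Finset.mem_sdiff, Finset.mem_insert, Finset.mem_singleton] at hl
      obtain ⟨-, hl2⟩ := hl
      push_neg at hl2
      obtain ⟨hl0, hl1⟩ := hl2
      have hsl : Equiv.swap p0 p1 l = l := Equiv.swap_apply_of_ne_of_ne hl0 hl1
      have hcl : ((j ∘ Equiv.swap p0 p1) l : ℕ) = (j l : ℕ) := by
        show ((j (Equiv.swap p0 p1 l)) : ℕ) = _; rw [hsl]
      have hq : qklCoeff n t k l (j ∘ Equiv.swap p0 p1) = qklCoeff n t k l j := by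
        rw [qklCoeff_eq, qklCoeff_eq, expo_swap_ne p0 p1 h01 k hl0 hl1]
      have hu0 : Function.update j l kf p0 = j p0 := Function.update_of_ne (Ne.symm hl0) kf j
      have hu1 : Function.update j l kf p1 = j p1 := Function.update_of_ne (Ne.symm hl1) kf j
      rw [hcl, hq, hT (Function.update j l kf), hu0, hu1, if_pos hlt,
        update_swap_ne p0 p1 hl0 hl1]
    · have hc0 : ((j ∘ Equiv.swap p0 p1) p0 : ℕ) = (j p1 : ℕ) := by
        show ((j (Equiv.swap p0 p1 p0)) : ℕ) = _; rw [Equiv.swap_apply_left]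
      have hc1 : ((j ∘ Equiv.swap p0 p1) p1 : ℕ) = (j p0 : ℕ) := by
        show ((j (Equiv.swap p0 p1 p1)) : ℕ) = _; rw [Equiv.swap_apply_right]
      rw [hc0, hc1]
      by_cases hb0 : (j p0 : ℕ) = k + 1
      · have hb1 : ¬ ((j p1 : ℕ) = k + 1) := by omega
        rw [if_pos hb0, if_pos hb0, if_neg hb1, if_neg hb1]
        have hu0 : Function.update j p0 kf p0 = kf := Function.update_self p0 kf j
        have hu1 : Function.update j p0 kf p1 = j p1 := Function.update_of_ne hne' kf j
        have hltv : kf < j p1 := by rw [Fin.lt_def]; omega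
        have hq : qklCoeff n t k p1 (j ∘ Equiv.swap p0 p1) = qklCoeff n t k p0 j := by
          rw [qkl_p1_swap p0 p1 t k h01 ht j, wgt_other (by omega) (by omega)]
          simp
        rw [hT (Function.update j p0 kf), hu0, hu1, if_pos hltv,
          update_p0_swap p0 p1 hne, hq, zero_add, add_zero]
      · by_cases hb1 : (j p1 : ℕ) = k + 1
        · rw [if_neg hb0, if_neg hb0, if_pos hb1, if_pos hb1]
          have hu0 : Function.update j p1 kf p0 = j p0 := Function.update_of_ne hne kf j
          have hu1 : Function.update j p1 kf p1 = kf := Function.update_self p1 kf j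
          by_cases ha : (j p0 : ℕ) = k
          · -- equal-values case
            have heqv : j p0 = kf := Fin.val_injective (by omega)
            have hnl : ¬ (j p0 < kf) := by rw [Fin.lt_def]; omega
            have hvec : Function.update (j ∘ Equiv.swap p0 p1) p0 kf
                = Function.update j p1 kf := by
              rw [← update_p1_swap p0 p1 hne j kf]
              exact comp_swap_self p0 p1 _ (by rw [hu0, hu1]; exact heqv)
            have hq : qklCoeff n t k p0 (j ∘ Equiv.swap p0 p1)
                = (t ^ 2)⁻¹ * qklCoeff n t k p1 j := by
              rw [qkl_p0_swap p0 p1 t k h01 ht j, ha, wgt_self,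
                show (-((2:ℤ) * 1)) = -2 by norm_num, zpow_neg_two']
            rw [hT (Function.update j p1 kf), hu0, hu1, if_neg hnl, if_pos heqv, hvec, hq,
              zero_add, add_zero, smul_smul, mul_comm]
          · have hltv : j p0 < kf := by rw [Fin.lt_def]; omega
            have hq : qklCoeff n t k p0 (j ∘ Equiv.swap p0 p1) = qklCoeff n t k p1 j := by
              rw [qkl_p0_swap p0 p1 t k h01 ht j, wgt_other ha (by omega)]
              simp
            rw [hT (Function.update j p1 kf), hu0, hu1, if_pos hltv,
              update_p1_swap p0 p1 hne, hq, zero_add, add_zero]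
        · rw [if_neg hb0, if_neg hb0, if_neg hb1, if_neg hb1]
  · -- a = b
    have heq' : (j p0 : ℕ) = (j p1 : ℕ) := congrArg Fin.val heq
    have hjs : j ∘ Equiv.swap p0 p1 = j := comp_swap_self p0 p1 j heq
    rw [if_neg (by rw [heq]; exact lt_irrefl _), if_pos heq, map_smul, hE j, Finset.smul_sum,
      sum_split p0 p1 hne, sum_split p0 p1 hne]
    congr 1
    · refine Finset.sum_congr rfl fun l hl => ?_
      rw [Finset.mem_sdiff, Finset.mem_insert, Finset.mem_singleton] at hl
      obtain ⟨-, hl2⟩ := hl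
      push_neg at hl2
      obtain ⟨hl0, hl1⟩ := hl2
      have hu0 : Function.update j l kf p0 = j p0 := Function.update_of_ne (Ne.symm hl0) kf j
      have hu1 : Function.update j l kf p1 = j p1 := Function.update_of_ne (Ne.symm hl1) kf j
      by_cases hc : (j l : ℕ) = k + 1
      · rw [if_pos hc, if_pos hc, hT (Function.update j l kf), hu0, hu1,
          if_neg (by rw [heq]; exact lt_irrefl _), if_pos heq, smul_smul, smul_smul, mul_comm]
      · rw [if_neg hc, if_neg hc, smul_zero]
    · by_cases hb0 : (j p0 : ℕ) = k + 1
      · have hb1 : (j p1 : ℕ) = k + 1 := by omega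
        rw [if_pos hb0, if_pos hb0, if_pos hb1, if_pos hb1]
        have hu00 : Function.update j p0 kf p0 = kf := Function.update_self p0 kf j
        have hu01 : Function.update j p0 kf p1 = j p1 := Function.update_of_ne hne' kf j
        have hu10 : Function.update j p1 kf p0 = j p0 := Function.update_of_ne hne kf j
        have hu11 : Function.update j p1 kf p1 = kf := Function.update_self p1 kf j
        have hlt0 : kf < j p1 := by rw [Fin.lt_def]; omega
        have hgt1 : ¬ (j p0 < kf) := by rw [Fin.lt_def]; omega
        have hne1 : ¬ (j p0 = kf) := fun h => by
          have := congrArg Fin.val h; omega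
        have hrel : qklCoeff n t k p1 j = (t ^ 2)⁻¹ * qklCoeff n t k p0 j := by
          rw [qkl_p1_p0 p0 p1 t k h01 ht j, hb0, hb1, wgt_succ,
            show ((-1:ℤ) + -1) = -2 by norm_num, zpow_neg_two']
        rw [hT (Function.update j p0 kf), hu00, hu01, if_pos hlt0,
          hT (Function.update j p1 kf), hu10, hu11, if_neg hgt1, if_neg hne1,
          update_p0_swap p0 p1 hne, update_p1_swap p0 p1 hne, hjs, hrel]
        match_scalars <;> (field_simp; try ring)
      · have hb1 : ¬ ((j p1 : ℕ) = k + 1) := by omega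
        rw [if_neg hb0, if_neg hb0, if_neg hb1, if_neg hb1]
        simp
  · -- a > b
    have hgt' : (j p1 : ℕ) < (j p0 : ℕ) := hgt
    rw [if_neg (lt_asymm hgt), if_neg hgt.ne', map_sub, map_smul, hE (j ∘ Equiv.swap p0 p1),
      hE j, Finset.smul_sum, ← Finset.sum_sub_distrib, sum_split p0 p1 hne,
      sum_split p0 p1 hne]
    congr 1
    · refine Finset.sum_congr rfl fun l hl => ?_
      rw [Finset.mem_sdiff, Finset.mem_insert, Finset.mem_singleton] at hl
      obtain ⟨-, hl2⟩ := hl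
      push_neg at hl2
      obtain ⟨hl0, hl1⟩ := hl2
      have hsl : Equiv.swap p0 p1 l = l := Equiv.swap_apply_of_ne_of_ne hl0 hl1
      have hcl : ((j ∘ Equiv.swap p0 p1) l : ℕ) = (j l : ℕ) := by
        show ((j (Equiv.swap p0 p1 l)) : ℕ) = _; rw [hsl]
      have hq : qklCoeff n t k l (j ∘ Equiv.swap p0 p1) = qklCoeff n t k l j := by
        rw [qklCoeff_eq, qklCoeff_eq, expo_swap_ne p0 p1 h01 k hl0 hl1]
      have hu0 : Function.update j l kf p0 = j p0 := Function.update_of_ne (Ne.symm hl0) kf j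
      have hu1 : Function.update j l kf p1 = j p1 := Function.update_of_ne (Ne.symm hl1) kf j
      rw [hcl, hq]
      by_cases hc : (j l : ℕ) = k + 1
      · rw [if_pos hc, if_pos hc, if_pos hc, hT (Function.update j l kf), hu0, hu1,
          if_neg (lt_asymm hgt), if_neg hgt.ne', update_swap_ne p0 p1 hl0 hl1]
        match_scalars <;> ring
      · rw [if_neg hc, if_neg hc, if_neg hc]
        simp
    · have hc0 : ((j ∘ Equiv.swap p0 p1) p0 : ℕ) = (j p1 : ℕ) := by
        show ((j (Equiv.swap p0 p1 p0)) : ℕ) = _; rw [Equiv.swap_apply_left]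
      have hc1 : ((j ∘ Equiv.swap p0 p1) p1 : ℕ) = (j p0 : ℕ) := by
        show ((j (Equiv.swap p0 p1 p1)) : ℕ) = _; rw [Equiv.swap_apply_right]
      rw [hc0, hc1]
      by_cases hb0 : (j p0 : ℕ) = k + 1
      · have hb1 : ¬ ((j p1 : ℕ) = k + 1) := by omega
        rw [if_pos hb0, if_pos hb0, if_pos hb0, if_neg hb1, if_neg hb1, if_neg hb1]
        have hu0 : Function.update j p0 kf p0 = kf := Function.update_self p0 kf j
        have hu1 : Function.update j p0 kf p1 = j p1 := Function.update_of_ne hne' kf j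
        by_cases hbk : (j p1 : ℕ) = k
        · -- j p1 = k : equal-values case after update
          have heqv : kf = j p1 := Fin.val_injective (by omega)
          have hnl : ¬ (kf < j p1) := by rw [Fin.lt_def]; omega
          have hvec : Function.update (j ∘ Equiv.swap p0 p1) p1 kf
              = Function.update j p0 kf := by
            rw [← update_p0_swap p0 p1 hne j kf]
            exact comp_swap_self p0 p1 _ (by rw [hu0, hu1]; exact heqv)
          have hq : qklCoeff n t k p1 (j ∘ Equiv.swap p0 p1)
              = t ^ 2 * qklCoeff n t k p0 j := by
            rw [qkl_p1_swap p0 p1 t k h01 ht j, hbk, wgt_self,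
              show ((2:ℤ) * 1) = 2 by norm_num, zpow_two'']
          rw [hT (Function.update j p0 kf), hu0, hu1, if_neg hnl, if_pos heqv, hvec, hq]
          match_scalars <;> (field_simp; try ring)
        · have hltv : j p1 < kf := by rw [Fin.lt_def]; omega
          have hq : qklCoeff n t k p1 (j ∘ Equiv.swap p0 p1) = qklCoeff n t k p0 j := by
            rw [qkl_p1_swap p0 p1 t k h01 ht j, wgt_other hbk hb1]
            simp
          rw [hT (Function.update j p0 kf), hu0, hu1, if_neg (by rw [Fin.lt_def]; omega),
            if_neg (fun h => by have := congrArg Fin.val h; omega),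
            update_p0_swap p0 p1 hne, hq]
          match_scalars <;> ring
      · by_cases hb1 : (j p1 : ℕ) = k + 1
        · rw [if_neg hb0, if_neg hb0, if_neg hb0, if_pos hb1, if_pos hb1, if_pos hb1]
          have hu0 : Function.update j p1 kf p0 = j p0 := Function.update_of_ne hne kf j
          have hu1 : Function.update j p1 kf p1 = kf := Function.update_self p1 kf j
          have hq : qklCoeff n t k p0 (j ∘ Equiv.swap p0 p1) = qklCoeff n t k p1 j := by
            rw [qkl_p0_swap p0 p1 t k h01 ht j, wgt_other (by omega) (by omega)]
            simp
          rw [hT (Function.update j p1 kf), hu0, hu1, if_neg (by rw [Fin.lt_def]; omega),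
            if_neg (fun h => by have := congrArg Fin.val h; omega),
            update_p1_swap p0 p1 hne, hq]
          match_scalars <;> ring
        · rw [if_neg hb0, if_neg hb0, if_neg hb0, if_neg hb1, if_neg hb1, if_neg hb1]
          simp

lemma commF_basis {n : ℕ} (t : ℂ) (ht : t ≠ 0) (k : ℕ)
    (kf : Fin n) (hkf : (kf : ℕ) = k + 1)
    (p0 p1 : Fin n) (h01 : (p0 : ℕ) + 1 = (p1 : ℕ))
    (Fk Tm : Module.End ℂ ((Fin n → Fin n) → ℂ))
    (hF : ∀ j : Fin n → Fin n, Fk (basisE n j) =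
      ∑ l : Fin n, if (j l : ℕ) = k then
        qklCoeff n t k l j • basisE n (Function.update j l kf) else 0)
    (hT : ∀ j : Fin n → Fin n, Tm (basisE n j) =
      if j p0 < j p1 then basisE n (j ∘ Equiv.swap p0 p1)
      else if j p0 = j p1 then (t ^ 2)⁻¹ • basisE n j
      else basisE n (j ∘ Equiv.swap p0 p1) - (t ^ 2 - (t ^ 2)⁻¹) • basisE n j)
    (j : Fin n → Fin n) :
    Tm (Fk (basisE n j)) = Fk (Tm (basisE n j)) := by
  classical
  have ht2 : (t : ℂ) ^ 2 ≠ 0 := pow_ne_zero 2 ht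
  have hne : p0 ≠ p1 := p0_ne_p1 p0 p1 h01
  have hne' : p1 ≠ p0 := hne.symm
  have hTite : ∀ (c : Prop) [Decidable c] (a : (Fin n → Fin n) → ℂ),
      Tm (if c then a else 0) = if c then Tm a else 0 := by
    intro c _ a; split_ifs <;> simp
  rw [hF j, map_sum]
  simp only [hTite, map_smul]
  rw [hT j]
  rcases lt_trichotomy (j p0) (j p1) with hlt | heq | hgt
  · -- a < b
    have hlt' : (j p0 : ℕ) < (j p1 : ℕ) := hlt
    rw [if_pos hlt, hF (j ∘ Equiv.swap p0 p1), sum_split p0 p1 hne, sum_split p0 p1 hne]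
    congr 1
    · refine Finset.sum_congr rfl fun l hl => ?_
      rw [Finset.mem_sdiff, Finset.mem_insert, Finset.mem_singleton] at hl
      obtain ⟨-, hl2⟩ := hl
      push_neg at hl2
      obtain ⟨hl0, hl1⟩ := hl2
      have hsl : Equiv.swap p0 p1 l = l := Equiv.swap_apply_of_ne_of_ne hl0 hl1
      have hcl : ((j ∘ Equiv.swap p0 p1) l : ℕ) = (j l : ℕ) := by
        show ((j (Equiv.swap p0 p1 l)) : ℕ) = _; rw [hsl]
      have hq : qklCoeff n t k l (j ∘ Equiv.swap p0 p1) = qklCoeff n t k l j := by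
        rw [qklCoeff_eq, qklCoeff_eq, expo_swap_ne p0 p1 h01 k hl0 hl1]
      have hu0 : Function.update j l kf p0 = j p0 := Function.update_of_ne (Ne.symm hl0) kf j
      have hu1 : Function.update j l kf p1 = j p1 := Function.update_of_ne (Ne.symm hl1) kf j
      rw [hcl, hq, hT (Function.update j l kf), hu0, hu1, if_pos hlt,
        update_swap_ne p0 p1 hl0 hl1]
    · have hc0 : ((j ∘ Equiv.swap p0 p1) p0 : ℕ) = (j p1 : ℕ) := by
        show ((j (Equiv.swap p0 p1 p0)) : ℕ) = _; rw [Equiv.swap_apply_left]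
      have hc1 : ((j ∘ Equiv.swap p0 p1) p1 : ℕ) = (j p0 : ℕ) := by
        show ((j (Equiv.swap p0 p1 p1)) : ℕ) = _; rw [Equiv.swap_apply_right]
      rw [hc0, hc1]
      by_cases hb0 : (j p0 : ℕ) = k
      · have hb1 : ¬ ((j p1 : ℕ) = k) := by omega
        rw [if_pos hb0, if_pos hb0, if_neg hb1, if_neg hb1]
        have hu0 : Function.update j p0 kf p0 = kf := Function.update_self p0 kf j
        have hu1 : Function.update j p0 kf p1 = j p1 := Function.update_of_ne hne' kf j
        by_cases hbk : (j p1 : ℕ) = k + 1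
        · -- equal-values case after update
          have heqv : kf = j p1 := Fin.val_injective (by omega)
          have hnl : ¬ (kf < j p1) := by rw [Fin.lt_def]; omega
          have hvec : Function.update (j ∘ Equiv.swap p0 p1) p1 kf
              = Function.update j p0 kf := by
            rw [← update_p0_swap p0 p1 hne j kf]
            exact comp_swap_self p0 p1 _ (by rw [hu0, hu1]; exact heqv)
          have hq : qklCoeff n t k p1 (j ∘ Equiv.swap p0 p1)
              = (t ^ 2)⁻¹ * qklCoeff n t k p0 j := by
            rw [qkl_p1_swap p0 p1 t k h01 ht j, hbk, wgt_succ,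
              show ((2:ℤ) * -1) = -2 by norm_num, zpow_neg_two']
          rw [hT (Function.update j p0 kf), hu0, hu1, if_neg hnl, if_pos heqv, hvec, hq,
            zero_add, add_zero, smul_smul, mul_comm]
        · have hltv : kf < j p1 := by rw [Fin.lt_def]; omega
          have hq : qklCoeff n t k p1 (j ∘ Equiv.swap p0 p1) = qklCoeff n t k p0 j := by
            rw [qkl_p1_swap p0 p1 t k h01 ht j, wgt_other (by omega) hbk]
            simp
          rw [hT (Function.update j p0 kf), hu0, hu1, if_pos hltv,
            update_p0_swap p0 p1 hne, hq, zero_add, add_zero]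
      · by_cases hb1 : (j p1 : ℕ) = k
        · rw [if_neg hb0, if_neg hb0, if_pos hb1, if_pos hb1]
          have hu0 : Function.update j p1 kf p0 = j p0 := Function.update_of_ne hne kf j
          have hu1 : Function.update j p1 kf p1 = kf := Function.update_self p1 kf j
          have hltv : j p0 < kf := by rw [Fin.lt_def]; omega
          have hq : qklCoeff n t k p0 (j ∘ Equiv.swap p0 p1) = qklCoeff n t k p1 j := by
            rw [qkl_p0_swap p0 p1 t k h01 ht j, wgt_other hb0 (by omega)]
            simp
          rw [hT (Function.update j p1 kf), hu0, hu1, if_pos hltv,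
            update_p1_swap p0 p1 hne, hq, zero_add, add_zero]
        · rw [if_neg hb0, if_neg hb0, if_neg hb1, if_neg hb1]
  · -- a = b
    have heq' : (j p0 : ℕ) = (j p1 : ℕ) := congrArg Fin.val heq
    have hjs : j ∘ Equiv.swap p0 p1 = j := comp_swap_self p0 p1 j heq
    rw [if_neg (by rw [heq]; exact lt_irrefl _), if_pos heq, map_smul, hF j, Finset.smul_sum,
      sum_split p0 p1 hne, sum_split p0 p1 hne]
    congr 1
    · refine Finset.sum_congr rfl fun l hl => ?_
      rw [Finset.mem_sdiff, Finset.mem_insert, Finset.mem_singleton] at hl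
      obtain ⟨-, hl2⟩ := hl
      push_neg at hl2
      obtain ⟨hl0, hl1⟩ := hl2
      have hu0 : Function.update j l kf p0 = j p0 := Function.update_of_ne (Ne.symm hl0) kf j
      have hu1 : Function.update j l kf p1 = j p1 := Function.update_of_ne (Ne.symm hl1) kf j
      by_cases hc : (j l : ℕ) = k
      · rw [if_pos hc, if_pos hc, hT (Function.update j l kf), hu0, hu1,
          if_neg (by rw [heq]; exact lt_irrefl _), if_pos heq, smul_smul, smul_smul, mul_comm]
      · rw [if_neg hc, if_neg hc, smul_zero]
    · by_cases hb0 : (j p0 : ℕ) = k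
      · have hb1 : (j p1 : ℕ) = k := by omega
        rw [if_pos hb0, if_pos hb0, if_pos hb1, if_pos hb1]
        have hu00 : Function.update j p0 kf p0 = kf := Function.update_self p0 kf j
        have hu01 : Function.update j p0 kf p1 = j p1 := Function.update_of_ne hne' kf j
        have hu10 : Function.update j p1 kf p0 = j p0 := Function.update_of_ne hne kf j
        have hu11 : Function.update j p1 kf p1 = kf := Function.update_self p1 kf j
        have hlt1 : j p0 < kf := by rw [Fin.lt_def]; omega
        have hgt0 : ¬ (kf < j p1) := by rw [Fin.lt_def]; omega
        have hne0 : ¬ (kf = j p1) := fun h => by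
          have := congrArg Fin.val h; omega
        have hrel : qklCoeff n t k p1 j = t ^ 2 * qklCoeff n t k p0 j := by
          rw [qkl_p1_p0 p0 p1 t k h01 ht j, hb0, hb1, wgt_self,
            show ((1:ℤ) + 1) = 2 by norm_num, zpow_two'']
        rw [hT (Function.update j p0 kf), hu00, hu01, if_neg hgt0, if_neg hne0,
          hT (Function.update j p1 kf), hu10, hu11, if_pos hlt1,
          update_p0_swap p0 p1 hne, update_p1_swap p0 p1 hne, hjs, hrel]
        match_scalars <;> (field_simp; try ring)
      · have hb1 : ¬ ((j p1 : ℕ) = k) := by omega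
        rw [if_neg hb0, if_neg hb0, if_neg hb1, if_neg hb1]
        simp
  · -- a > b
    have hgt' : (j p1 : ℕ) < (j p0 : ℕ) := hgt
    rw [if_neg (lt_asymm hgt), if_neg hgt.ne', map_sub, map_smul, hF (j ∘ Equiv.swap p0 p1),
      hF j, Finset.smul_sum, ← Finset.sum_sub_distrib, sum_split p0 p1 hne,
      sum_split p0 p1 hne]
    congr 1
    · refine Finset.sum_congr rfl fun l hl => ?_
      rw [Finset.mem_sdiff, Finset.mem_insert, Finset.mem_singleton] at hl
      obtain ⟨-, hl2⟩ := hl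
      push_neg at hl2
      obtain ⟨hl0, hl1⟩ := hl2
      have hsl : Equiv.swap p0 p1 l = l := Equiv.swap_apply_of_ne_of_ne hl0 hl1
      have hcl : ((j ∘ Equiv.swap p0 p1) l : ℕ) = (j l : ℕ) := by
        show ((j (Equiv.swap p0 p1 l)) : ℕ) = _; rw [hsl]
      have hq : qklCoeff n t k l (j ∘ Equiv.swap p0 p1) = qklCoeff n t k l j := by
        rw [qklCoeff_eq, qklCoeff_eq, expo_swap_ne p0 p1 h01 k hl0 hl1]
      have hu0 : Function.update j l kf p0 = j p0 := Function.update_of_ne (Ne.symm hl0) kf j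
      have hu1 : Function.update j l kf p1 = j p1 := Function.update_of_ne (Ne.symm hl1) kf j
      rw [hcl, hq]
      by_cases hc : (j l : ℕ) = k
      · rw [if_pos hc, if_pos hc, if_pos hc, hT (Function.update j l kf), hu0, hu1,
          if_neg (lt_asymm hgt), if_neg hgt.ne', update_swap_ne p0 p1 hl0 hl1]
        match_scalars <;> ring
      · rw [if_neg hc, if_neg hc, if_neg hc]
        simp
    · have hc0 : ((j ∘ Equiv.swap p0 p1) p0 : ℕ) = (j p1 : ℕ) := by
        show ((j (Equiv.swap p0 p1 p0)) : ℕ) = _; rw [Equiv.swap_apply_left]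
      have hc1 : ((j ∘ Equiv.swap p0 p1) p1 : ℕ) = (j p0 : ℕ) := by
        show ((j (Equiv.swap p0 p1 p1)) : ℕ) = _; rw [Equiv.swap_apply_right]
      rw [hc0, hc1]
      by_cases hb0 : (j p0 : ℕ) = k
      · have hb1 : ¬ ((j p1 : ℕ) = k) := by omega
        rw [if_pos hb0, if_pos hb0, if_pos hb0, if_neg hb1, if_neg hb1, if_neg hb1]
        have hu0 : Function.update j p0 kf p0 = kf := Function.update_self p0 kf j
        have hu1 : Function.update j p0 kf p1 = j p1 := Function.update_of_ne hne' kf j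
        have hq : qklCoeff n t k p1 (j ∘ Equiv.swap p0 p1) = qklCoeff n t k p0 j := by
          rw [qkl_p1_swap p0 p1 t k h01 ht j, wgt_other hb1 (by omega)]
          simp
        rw [hT (Function.update j p0 kf), hu0, hu1, if_neg (by rw [Fin.lt_def]; omega),
          if_neg (fun h => by have := congrArg Fin.val h; omega),
          update_p0_swap p0 p1 hne, hq]
        match_scalars <;> ring
      · by_cases hb1 : (j p1 : ℕ) = k
        · rw [if_neg hb0, if_neg hb0, if_neg hb0, if_pos hb1, if_pos hb1, if_pos hb1]
          have hu0 : Function.update j p1 kf p0 = j p0 := Function.update_of_ne hne kf j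
          have hu1 : Function.update j p1 kf p1 = kf := Function.update_self p1 kf j
          by_cases ha : (j p0 : ℕ) = k + 1
          · -- equal-values case after update
            have heqv : j p0 = kf := Fin.val_injective (by omega)
            have hnl : ¬ (j p0 < kf) := by rw [Fin.lt_def]; omega
            have hvec : Function.update (j ∘ Equiv.swap p0 p1) p0 kf
                = Function.update j p1 kf := by
              rw [← update_p1_swap p0 p1 hne j kf]
              exact comp_swap_self p0 p1 _ (by rw [hu0, hu1]; exact heqv)
            have hq : qklCoeff n t k p0 (j ∘ Equiv.swap p0 p1)
                = t ^ 2 * qklCoeff n t k p1 j := by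
              rw [qkl_p0_swap p0 p1 t k h01 ht j, ha, wgt_succ,
                show (-((2:ℤ) * -1)) = 2 by norm_num, zpow_two'']
            rw [hT (Function.update j p1 kf), hu0, hu1, if_neg hnl, if_pos heqv, hvec, hq]
            match_scalars <;> (field_simp; try ring)
          · have hq : qklCoeff n t k p0 (j ∘ Equiv.swap p0 p1) = qklCoeff n t k p1 j := by
              rw [qkl_p0_swap p0 p1 t k h01 ht j, wgt_other hb0 ha]
              simp
            rw [hT (Function.update j p1 kf), hu0, hu1, if_neg (by rw [Fin.lt_def]; omega),
              if_neg (fun h => by have := congrArg Fin.val h; omega),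
              update_p1_swap p0 p1 hne, hq]
            match_scalars <;> ring
        · rw [if_neg hb0, if_neg hb0, if_neg hb0, if_neg hb1, if_neg hb1, if_neg hb1]
          simp

lemma commK_basis {n : ℕ} (t : ℂ) (μ : Fin n → ℤ)
    (p0 p1 : Fin n)
    (Km Tm : Module.End ℂ ((Fin n → Fin n) → ℂ))
    (hK : ∀ j : Fin n → Fin n, Km (basisE n j) = (t ^ (∑ p : Fin n, μ (j p))) • basisE n j)
    (hT : ∀ j : Fin n → Fin n, Tm (basisE n j) =
      if j p0 < j p1 then basisE n (j ∘ Equiv.swap p0 p1)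
      else if j p0 = j p1 then (t ^ 2)⁻¹ • basisE n j
      else basisE n (j ∘ Equiv.swap p0 p1) - (t ^ 2 - (t ^ 2)⁻¹) • basisE n j)
    (j : Fin n → Fin n) :
    Tm (Km (basisE n j)) = Km (Tm (basisE n j)) := by
  have hsum : (∑ p : Fin n, μ ((j ∘ Equiv.swap p0 p1) p)) = ∑ p : Fin n, μ (j p) :=
    Fintype.sum_equiv (Equiv.swap p0 p1) _ _ (fun p => rfl)
  rw [hK j, map_smul, hT j]
  rcases lt_trichotomy (j p0) (j p1) with hlt | heq | hgt
  · rw [if_pos hlt, hK (j ∘ Equiv.swap p0 p1), hsum]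
  · rw [if_neg (by rw [heq]; exact lt_irrefl _), if_pos heq, map_smul, hK j, smul_comm]
  · rw [if_neg (lt_asymm hgt), if_neg hgt.ne', map_sub, map_smul,
      hK (j ∘ Equiv.swap p0 p1), hK j, hsum]
    match_scalars <;> ring

/-- Quantum Schur–Weyl commutation: the Hecke operators `T_m` commute with the
`U_q(gl_n)` operators `E_k`, `F_k`, `K^λ` on `V = (ℂⁿ)^{⊗n}` (with `q = t²`, `t ≠ 0`;
here `μ = 2λ ∈ ℤⁿ` encodes the half-integral weight `λ ∈ (½ℤ)ⁿ`, so that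
`K^λ e_j = t^{2(λ_{j_1}+⋯+λ_{j_n})} e_j = t^{μ_{j_1}+⋯+μ_{j_n}} e_j`).
All position/value indices are 0-indexed: `E_k` turns an entry with value `k+1`
into `k`, `F_k` turns an entry with value `k` into `k+1`, and `T_m` acts on the
entries in positions `m`, `m+1`. -/
theorem stmt9 (n : ℕ) (hn : 2 ≤ n) (t : ℂ) (ht : t ≠ 0)
    (E F : ℕ → Module.End ℂ ((Fin n → Fin n) → ℂ))
    (K : (Fin n → ℤ) → Module.End ℂ ((Fin n → Fin n) → ℂ))
    (T : ℕ → Module.End ℂ ((Fin n → Fin n) → ℂ))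
    (hE : ∀ (k : ℕ) (hk : k + 1 < n) (j : Fin n → Fin n),
      E k (basisE n j) =
        ∑ l : Fin n,
          if (j l : ℕ) = k + 1 then
            qklCoeff n t k l j • basisE n (Function.update j l ⟨k, by omega⟩)
          else 0)
    (hF : ∀ (k : ℕ) (hk : k + 1 < n) (j : Fin n → Fin n),
      F k (basisE n j) =
        ∑ l : Fin n,
          if (j l : ℕ) = k then
            qklCoeff n t k l j • basisE n (Function.update j l ⟨k + 1, hk⟩)
          else 0)
    (hK : ∀ (μ : Fin n → ℤ) (j : Fin n → Fin n),
      K μ (basisE n j) = (t ^ (∑ p : Fin n, μ (j p))) • basisE n j)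
    (hT : ∀ (m : ℕ) (hm : m + 1 < n) (j : Fin n → Fin n),
      T m (basisE n j) =
        if j ⟨m, by omega⟩ < j ⟨m + 1, hm⟩ then
          basisE n (j ∘ Equiv.swap ⟨m, by omega⟩ ⟨m + 1, hm⟩)
        else if j ⟨m, by omega⟩ = j ⟨m + 1, hm⟩ then
          (t ^ 2)⁻¹ • basisE n j
        else
          basisE n (j ∘ Equiv.swap ⟨m, by omega⟩ ⟨m + 1, hm⟩) -
            (t ^ 2 - (t ^ 2)⁻¹) • basisE n j) :
    (∀ k m : ℕ, k + 1 < n → m + 1 < n →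
      T m * E k = E k * T m ∧ T m * F k = F k * T m) ∧
    (∀ (μ : Fin n → ℤ) (m : ℕ), m + 1 < n → T m * K μ = K μ * T m) := by
  have hbasis : ∀ j : Fin n → Fin n, basisE n j = Pi.basisFun ℂ (Fin n → Fin n) j := by
    intro j; simp [basisE, Pi.basisFun_apply]
  refine ⟨fun k m hk hm => ⟨?_, ?_⟩, fun μ m hm => ?_⟩
  · refine (Pi.basisFun ℂ (Fin n → Fin n)).ext fun j => ?_
    rw [← hbasis j]
    simp only [Module.End.mul_apply]
    exact commE_basis t ht k ⟨k, by omega⟩ rfl ⟨m, by omega⟩ ⟨m + 1, hm⟩ rfl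
      (E k) (T m) (hE k hk) (hT m hm) j
  · refine (Pi.basisFun ℂ (Fin n → Fin n)).ext fun j => ?_
    rw [← hbasis j]
    simp only [Module.End.mul_apply]
    exact commF_basis t ht k ⟨k + 1, hk⟩ rfl ⟨m, by omega⟩ ⟨m + 1, hm⟩ rfl
      (F k) (T m) (hF k hk) (hT m hm) j
  · refine (Pi.basisFun ℂ (Fin n → Fin n)).ext fun j => ?_
    rw [← hbasis j]
    simp only [Module.End.mul_apply]
    exact commK_basis t μ ⟨m, by omega⟩ ⟨m + 1, hm⟩
      (K μ) (T m) (hK μ) (hT m hm) j
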